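/- For all n ≥ 4, the graceful chromatic number of the slanting ladder SL_n equals 5. -/
import Mathlib


/-- A graceful `k`-coloring of `G`: a proper vertex coloring with colors in
`{1, ..., k}` whose induced edge coloring `f*(uv) = |f u - f v|` is a proper
edge coloring. -/
def IsGracefulColoring {V : Type*} (G : SimpleGraph V) (k : ℕ) (f : V → ℕ) : Prop :=
  (∀ v, 1 ≤ f v ∧ f v ≤ k) ∧
  (∀ ⦃u v⦄, G.Adj u v → f u ≠ f v) ∧
  (∀ ⦃u v w⦄, G.Adj u v → G.Adj u w → v ≠ w →
    ((f u : ℤ) - f v).natAbs ≠ ((f u : ℤ) - f w).natAbs)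

/-- The graceful chromatic number: the least `k` admitting a graceful `k`-coloring. -/
noncomputable def gracefulChromaticNumber {V : Type*} (G : SimpleGraph V) : ℕ :=
  sInf {k | ∃ f : V → ℕ, IsGracefulColoring G k f}

/-- The slanting ladder `SL_n`: rails `x_i x_{i+1}`, `y_i y_{i+1}` together with the
slanted edges `x_i y_{i+1}` (row `0` is `x`, row `1` is `y`). -/
def slantingLadder (n : ℕ) : SimpleGraph (Fin 2 × Fin n) :=
  SimpleGraph.fromRel (fun a b =>
    (a.1 = b.1 ∧ a.2.val + 1 = b.2.val) ∨
    (a.1 = 0 ∧ b.1 = 1 ∧ a.2.val + 1 = b.2.val))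

/-! ### Auxiliary definitions and lemmas -/

/-- The periodic colour pattern `1,2,4,5,1,2,4,5,...`. -/
def pat (i : ℕ) : ℕ :=
  if i % 4 = 0 then 1 else if i % 4 = 1 then 2 else if i % 4 = 2 then 4 else 5

lemma pat_cases (i : ℕ) :
    (pat i = 1 ∧ pat (i+1) = 2 ∧ pat (i+2) = 4 ∧ pat (i+3) = 5) ∨
    (pat i = 2 ∧ pat (i+1) = 4 ∧ pat (i+2) = 5 ∧ pat (i+3) = 1) ∨
    (pat i = 4 ∧ pat (i+1) = 5 ∧ pat (i+2) = 1 ∧ pat (i+3) = 2) ∨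
    (pat i = 5 ∧ pat (i+1) = 1 ∧ pat (i+2) = 2 ∧ pat (i+3) = 4) := by
  unfold pat
  rcases show i % 4 = 0 ∨ i % 4 = 1 ∨ i % 4 = 2 ∨ i % 4 = 3 by omega with h | h | h | h
  · left
    simp only [h, show (i+1)%4 = 1 by omega, show (i+2)%4 = 2 by omega,
      show (i+3)%4 = 3 by omega]
    norm_num
  · right; left
    simp only [h, show (i+1)%4 = 2 by omega, show (i+2)%4 = 3 by omega,
      show (i+3)%4 = 0 by omega]
    norm_num
  · right; right; left
    simp only [h, show (i+1)%4 = 3 by omega, show (i+2)%4 = 0 by omega,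
      show (i+3)%4 = 1 by omega]
    norm_num
  · right; right; right
    simp only [h, show (i+1)%4 = 0 by omega, show (i+2)%4 = 1 by omega,
      show (i+3)%4 = 2 by omega]
    norm_num

lemma pat_bounds (i : ℕ) : 1 ≤ pat i ∧ pat i ≤ 5 := by
  rcases pat_cases i with ⟨h, -⟩ | ⟨h, -⟩ | ⟨h, -⟩ | ⟨h, -⟩ <;> omega

lemma pat_ne (i : ℕ) : pat i ≠ pat (i+1) ∧ pat (i+1) ≠ pat (i+2) ∧ pat i ≠ pat (i+2) := by
  rcases pat_cases i with ⟨h0, h1, h2, h3⟩ | ⟨h0, h1, h2, h3⟩ | ⟨h0, h1, h2, h3⟩ |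
    ⟨h0, h1, h2, h3⟩ <;> omega

lemma pat_G (i : ℕ) :
    ((pat (i+1) : ℤ) - pat (i+2)).natAbs ≠ ((pat (i+1) : ℤ) - pat i).natAbs ∧
    ((pat i : ℤ) - pat (i+1)).natAbs ≠ ((pat i : ℤ) - pat (i+2)).natAbs ∧
    ((pat (i+1) : ℤ) - pat i).natAbs ≠ ((pat (i+1) : ℤ) - pat (i+3)).natAbs ∧
    ((pat (i+2) : ℤ) - pat (i+3)).natAbs ≠ ((pat (i+2) : ℤ) - pat (i+1)).natAbs ∧
    ((pat (i+2) : ℤ) - pat (i+1)).natAbs ≠ ((pat (i+2) : ℤ) - pat i).natAbs ∧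
    ((pat (i+2) : ℤ) - pat (i+3)).natAbs ≠ ((pat (i+2) : ℤ) - pat i).natAbs := by
  rcases pat_cases i with ⟨h0, h1, h2, h3⟩ | ⟨h0, h1, h2, h3⟩ | ⟨h0, h1, h2, h3⟩ |
    ⟨h0, h1, h2, h3⟩ <;> rw [h0, h1, h2, h3] <;> norm_num

lemma adj_cases {n : ℕ} {u v : Fin 2 × Fin n} (h : (slantingLadder n).Adj u v) :
    (u.1.val = v.1.val ∧ (u.2.val + 1 = v.2.val ∨ v.2.val + 1 = u.2.val)) ∨
    (u.1.val = 0 ∧ v.1.val = 1 ∧ u.2.val + 1 = v.2.val) ∨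
    (u.1.val = 1 ∧ v.1.val = 0 ∧ v.2.val + 1 = u.2.val) := by
  simp only [slantingLadder, SimpleGraph.fromRel_adj, Fin.ext_iff, Fin.val_zero,
    Fin.val_one] at h
  rcases h.2 with (⟨h1, h2⟩ | ⟨h1, h2, h3⟩) | (⟨h1, h2⟩ | ⟨h1, h2, h3⟩)
  · exact Or.inl ⟨h1, Or.inl h2⟩
  · exact Or.inr (Or.inl ⟨h1, h2, h3⟩)
  · exact Or.inl ⟨h1.symm, Or.inr h2⟩
  · exact Or.inr (Or.inr ⟨h2, h1, h3⟩)

/-- Master lemma for the induced-edge-colouring condition of the pattern colouring. -/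
lemma pat_master (p q r a b c : ℕ) (hvw : ¬ (q = r ∧ b = c))
    (hv : (p = q ∧ (a + 1 = b ∨ b + 1 = a)) ∨ (p = 0 ∧ q = 1 ∧ a + 1 = b) ∨
      (p = 1 ∧ q = 0 ∧ b + 1 = a))
    (hw : (p = r ∧ (a + 1 = c ∨ c + 1 = a)) ∨ (p = 0 ∧ r = 1 ∧ a + 1 = c) ∨
      (p = 1 ∧ r = 0 ∧ c + 1 = a)) :
    ((pat (a + p) : ℤ) - pat (b + q)).natAbs ≠ ((pat (a + p) : ℤ) - pat (c + r)).natAbs := by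
  rcases hv with ⟨hq, hb | hb⟩ | ⟨hp, hq, hb⟩ | ⟨hp, hq, hb⟩ <;>
    rcases hw with ⟨hr, hc | hc⟩ | ⟨hp', hr, hc⟩ | ⟨hp', hr, hc⟩
  -- v future same row
  · exact absurd ⟨by omega, by omega⟩ hvw  -- w future same row : v = w
  · -- w past same row
    rw [show a + p = c + p + 1 by omega, show b + q = c + p + 2 by omega,
      show c + r = c + p by omega]
    exact (pat_G (c + p)).1
  · -- p = 0, w slant forward
    rw [show a + p = a + 0 by omega, show b + q = a + 1 by omega,
      show c + r = a + 2 by omega, show a + 0 = a from rfl]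
    exact (pat_G a).2.1
  · -- p = 1, w slant backward
    rw [show a + p = c + 2 by omega, show b + q = c + 3 by omega,
      show c + r = c + 0 by omega, show c + 0 = c from rfl]
    exact (pat_G c).2.2.2.2.2
  -- v past same row
  · rw [show a + p = b + p + 1 by omega, show b + q = b + p by omega,
      show c + r = b + p + 2 by omega]
    exact ((pat_G (b + p)).1).symm
  · exact absurd ⟨by omega, by omega⟩ hvw
  · -- p = 0, w slant forward
    rw [show a + p = b + 1 by omega, show b + q = b + 0 by omega,
      show c + r = b + 3 by omega, show b + 0 = b from rfl]
    exact (pat_G b).2.2.1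
  · -- p = 1, w slant backward
    rw [show a + p = c + 2 by omega, show b + q = c + 1 by omega,
      show c + r = c + 0 by omega, show c + 0 = c from rfl]
    exact (pat_G c).2.2.2.2.1
  -- v slant forward (p = 0)
  · rw [show a + p = a + 0 by omega, show b + q = a + 2 by omega,
      show c + r = a + 1 by omega, show a + 0 = a from rfl]
    exact ((pat_G a).2.1).symm
  · rw [show a + p = c + 1 by omega, show b + q = c + 3 by omega,
      show c + r = c + 0 by omega, show c + 0 = c from rfl]
    exact ((pat_G c).2.2.1).symm
  · exact absurd ⟨by omega, by omega⟩ hvw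
  · omega
  -- v slant backward (p = 1)
  · rw [show a + p = b + 2 by omega, show b + q = b + 0 by omega,
      show c + r = b + 3 by omega, show b + 0 = b from rfl]
    exact ((pat_G b).2.2.2.2.2).symm
  · rw [show a + p = b + 2 by omega, show b + q = b + 0 by omega,
      show c + r = b + 1 by omega, show b + 0 = b from rfl]
    exact ((pat_G b).2.2.2.2.1).symm
  · omega
  · exact absurd ⟨by omega, by omega⟩ hvw

/-- The pattern colouring is a graceful 5-colouring of `SL_n`. -/
lemma exists_graceful_five (n : ℕ) :
    ∃ f : Fin 2 × Fin n → ℕ, IsGracefulColoring (slantingLadder n) 5 f := by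
  refine ⟨fun v => pat (v.2.val + v.1.val), ?_, ?_, ?_⟩
  · intro v; exact pat_bounds _
  · intro u v h
    show pat (u.2.val + u.1.val) ≠ pat (v.2.val + v.1.val)
    rcases adj_cases h with ⟨h1, h2 | h2⟩ | ⟨h1, h2, h3⟩ | ⟨h1, h2, h3⟩
    · rw [show v.2.val + v.1.val = (u.2.val + u.1.val) + 1 by omega]
      exact (pat_ne _).1
    · rw [show u.2.val + u.1.val = (v.2.val + v.1.val) + 1 by omega]
      exact ((pat_ne _).1).symm
    · rw [h1, h2, show v.2.val + 1 = (u.2.val + 0) + 2 by omega]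
      exact (pat_ne _).2.2
    · rw [h1, h2, show u.2.val + 1 = (v.2.val + 0) + 2 by omega]
      exact ((pat_ne _).2.2).symm
  · intro u v w hv hw hvw
    refine pat_master u.1.val v.1.val w.1.val u.2.val v.2.val w.2.val ?_
      ?_ ?_
    · rintro ⟨h1, h2⟩
      exact hvw (Prod.ext_iff.mpr ⟨Fin.ext h1, Fin.ext h2⟩)
    · rcases adj_cases hv with h | h | h
      · exact Or.inl h
      · exact Or.inr (Or.inl h)
      · exact Or.inr (Or.inr h)
    · rcases adj_cases hw with h | h | h
      · exact Or.inl h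
      · exact Or.inr (Or.inl h)
      · exact Or.inr (Or.inr h)

lemma adj_rail {n : ℕ} (r : Fin 2) (i j : Fin n) (h : i.val + 1 = j.val) :
    (slantingLadder n).Adj (r, i) (r, j) := by
  refine ⟨?_, Or.inl (Or.inl ⟨rfl, h⟩)⟩
  intro he
  simp only [Prod.mk.injEq, Fin.ext_iff] at he
  omega

lemma adj_slant {n : ℕ} (i j : Fin n) (h : i.val + 1 = j.val) :
    (slantingLadder n).Adj (0, i) (1, j) := by
  refine ⟨?_, Or.inl (Or.inr ⟨rfl, rfl, h⟩)⟩
  intro he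
  simp only [Prod.mk.injEq] at he
  exact absurd he.1 (by decide)

/-- A degree-3 vertex in a graceful 4-colouring must receive colour 1 or 4. -/
lemma degree_three_color (c ca cb cc : ℕ)
    (h : 1 ≤ c ∧ c ≤ 4) (ha : 1 ≤ ca ∧ ca ≤ 4) (hb : 1 ≤ cb ∧ cb ≤ 4)
    (hc : 1 ≤ cc ∧ cc ≤ 4)
    (na : c ≠ ca) (nb : c ≠ cb) (nc : c ≠ cc)
    (dab : ((c : ℤ) - ca).natAbs ≠ ((c : ℤ) - cb).natAbs)
    (dac : ((c : ℤ) - ca).natAbs ≠ ((c : ℤ) - cc).natAbs)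
    (dbc : ((c : ℤ) - cb).natAbs ≠ ((c : ℤ) - cc).natAbs) :
    c = 1 ∨ c = 4 := by
  omega

theorem gracefulChromaticNumber_slantingLadder (n : ℕ) (hn : 4 ≤ n) :
    gracefulChromaticNumber (slantingLadder n) = 5 := by
  have h5 : (5 : ℕ) ∈ {k | ∃ f : Fin 2 × Fin n → ℕ, IsGracefulColoring (slantingLadder n) k f} :=
    exists_graceful_five n
  refine le_antisymm (Nat.sInf_le h5) (le_csInf ⟨5, h5⟩ ?_)
  rintro k ⟨f, hb, hp, hd⟩
  by_contra hk
  push_neg at hk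
  -- vertices
  have h0 : (0 : ℕ) < n := by omega
  have h1 : (1 : ℕ) < n := by omega
  have h2 : (2 : ℕ) < n := by omega
  have h3 : (3 : ℕ) < n := by omega
  set x0 : Fin 2 × Fin n := (0, ⟨0, h0⟩) with hx0
  set x1 : Fin 2 × Fin n := (0, ⟨1, h1⟩) with hx1
  set x2 : Fin 2 × Fin n := (0, ⟨2, h2⟩) with hx2
  set x3 : Fin 2 × Fin n := (0, ⟨3, h3⟩) with hx3
  set y1 : Fin 2 × Fin n := (1, ⟨1, h1⟩) with hy1
  set y2 : Fin 2 × Fin n := (1, ⟨2, h2⟩) with hy2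
  set y3 : Fin 2 × Fin n := (1, ⟨3, h3⟩) with hy3
  -- adjacencies
  have a01 : (slantingLadder n).Adj x0 x1 := adj_rail _ _ _ rfl
  have a12 : (slantingLadder n).Adj x1 x2 := adj_rail _ _ _ rfl
  have a23 : (slantingLadder n).Adj x2 x3 := adj_rail _ _ _ rfl
  have ay12 : (slantingLadder n).Adj y1 y2 := adj_rail _ _ _ rfl
  have ay23 : (slantingLadder n).Adj y2 y3 := adj_rail _ _ _ rfl
  have as12 : (slantingLadder n).Adj x1 y2 := adj_slant _ _ rfl
  have as23 : (slantingLadder n).Adj x2 y3 := adj_slant _ _ rfl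
  -- distinctness of various vertices
  have exy : ∀ (p q : Fin 2) (i j : Fin n), (p.val ≠ q.val ∨ i.val ≠ j.val) →
      ((p, i) : Fin 2 × Fin n) ≠ (q, j) := by
    intro p q i j h he
    simp only [Prod.mk.injEq, Fin.ext_iff] at he
    omega
  have bnd : ∀ v, 1 ≤ f v ∧ f v ≤ 4 := fun v => ⟨(hb v).1, by have := (hb v).2; omega⟩
  -- f x1 ∈ {1,4} : neighbours x0 x2 y2
  have hfx1 : f x1 = 1 ∨ f x1 = 4 :=
    degree_three_color (f x1) (f x0) (f x2) (f y2) (bnd _) (bnd _) (bnd _) (bnd _)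
      (hp a01.symm) (hp a12) (hp as12)
      (hd a01.symm a12 (exy _ _ _ _ (Or.inr (by norm_num))))
      (hd a01.symm as12 (exy _ _ _ _ (Or.inl (by norm_num))))
      (hd a12 as12 (exy _ _ _ _ (Or.inl (by norm_num))))
  -- f x2 ∈ {1,4} : neighbours x1 x3 y3
  have hfx2 : f x2 = 1 ∨ f x2 = 4 :=
    degree_three_color (f x2) (f x1) (f x3) (f y3) (bnd _) (bnd _) (bnd _) (bnd _)
      (hp a12.symm) (hp a23) (hp as23)
      (hd a12.symm a23 (exy _ _ _ _ (Or.inr (by norm_num))))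
      (hd a12.symm as23 (exy _ _ _ _ (Or.inl (by norm_num))))
      (hd a23 as23 (exy _ _ _ _ (Or.inl (by norm_num))))
  -- f y2 ∈ {1,4} : neighbours y1 y3 x1
  have hfy2 : f y2 = 1 ∨ f y2 = 4 :=
    degree_three_color (f y2) (f y1) (f y3) (f x1) (bnd _) (bnd _) (bnd _) (bnd _)
      (hp ay12.symm) (hp ay23) (hp as12.symm)
      (hd ay12.symm ay23 (exy _ _ _ _ (Or.inr (by norm_num))))
      (hd ay12.symm as12.symm (exy _ _ _ _ (Or.inl (by norm_num))))
      (hd ay23 as12.symm (exy _ _ _ _ (Or.inl (by norm_num))))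
  have hne1 : f x1 ≠ f x2 := hp a12
  have hne2 : f x1 ≠ f y2 := hp as12
  have heq : f x2 = f y2 := by omega
  have := hd a12 as12 (exy _ _ _ _ (Or.inl (by norm_num)))
  rw [heq] at this
  exact this rfl
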